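/- arXiv:0806.3277 — 3 statements merged into one kernel-verified Lean document; each statement's English description precedes it below -/
import Mathlib

section
/- Extended McMillan Theorem: Let C and D be uniquely decipherable codes over the same finite nonempty alphabet A with r elements, such that every string in C is a concatenation of a finite sequence of strings in D. Then the Kraft sum of C is less than or equal to the Kraft sum of D, i.e. K(C) ≤ K(D). -/
/-!
The tensor-power trick. By unique decipherability, `K(C)^n` is the weighted count of the
distinct strings that are concatenations of `n` words of `C`. Refining each of the `n` words
into its `D`-factorization maps these injectively to sequences of `D`-words whose length lies
between `n` and `n L`, where `L` bounds the factorization lengths, so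
`K(C)^n ≤ ∑_{m = n}^{n L} K(D)^m`. If `K(D) < 1` the right side is at most `(n L + 1) K(D)^n`,
and letting `n → ∞` gives `K(C) ≤ K(D)`; if `K(D) ≥ 1`, McMillan's inequality `K(C) ≤ 1`
already suffices.
-/

/-- A finite set `C` of strings over `A` is a uniquely decipherable code if the
concatenation map is injective on finite sequences of elements of `C`. -/
def UniquelyDecipherable {A : Type*} (C : Finset (List A)) : Prop :=
  ∀ u v : List (List A), (∀ x ∈ u, x ∈ C) → (∀ x ∈ v, x ∈ C) →
    u.flatten = v.flatten → u = v

/-- The Kraft sum `K(C) = Σ_{x ∈ C} r^{-len(x)}` where `r` is the size of the alphabet. -/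
noncomputable def kraftSum {A : Type*} [Fintype A] (C : Finset (List A)) : ℝ :=
  ∑ x ∈ C, (Fintype.card A : ℝ) ^ (-(x.length : ℤ))

open Finset

open Asymptotics Filter in
theorem le_one_of_forall_pow_le_linear {y a b : ℝ} (h : ∀ n : ℕ, y ^ n ≤ a * n + b) : y ≤ 1 := by
  by_contra! hy
  have hlin : (fun n : ℕ => a * n + b) =o[atTop] fun n => y ^ n :=
    ((isLittleO_coe_const_pow_of_one_lt hy).const_mul_left a).add
      (isLittleO_const_left.2 <| Or.inr <|
        tendsto_norm_atTop_atTop.comp (tendsto_pow_atTop_atTop_of_one_lt hy))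
  obtain ⟨n, hn⟩ := (hlin.def one_half_pos).exists
  have hpos : 0 < y ^ n := pow_pos (by linarith) n
  rw [Real.norm_of_nonneg hpos.le, Real.norm_eq_abs] at hn
  linarith [h n, le_abs_self (a * n + b)]

theorem le_of_forall_pow_le_linear_mul_pow {x y a b : ℝ} (hy : 0 ≤ y)
    (h : ∀ n : ℕ, x ^ n ≤ (a * n + b) * y ^ n) : x ≤ y := by
  obtain rfl | hy_pos := hy.eq_or_lt
  · simpa using h 1
  have : x / y ≤ 1 := le_one_of_forall_pow_le_linear fun n => by
    rw [div_pow, div_le_iff₀ (pow_pos hy_pos n)]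
    exact h n
  rwa [div_le_one hy_pos] at this

theorem sum_Icc_pow_le {y : ℝ} (hy₀ : 0 ≤ y) (hy₁ : y ≤ 1) (n N : ℕ) :
    ∑ m ∈ Icc n N, y ^ m ≤ (N + 1) * y ^ n := by
  calc ∑ m ∈ Icc n N, y ^ m
      ≤ (Icc n N).card • y ^ n :=
        sum_le_card_nsmul _ _ _ fun m hm =>
          pow_le_pow_of_le_one hy₀ hy₁ (mem_Icc.1 hm).1
    _ ≤ (N + 1) * y ^ n := by
        rw [nsmul_eq_mul, Nat.card_Icc]
        gcongr
        exact_mod_cast Nat.sub_le _ _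

section ListsOfLength

variable {α : Type*} [DecidableEq α]

def listsOfLength (s : Finset α) (n : ℕ) : Finset (List α) :=
  (Fintype.piFinset fun _ : Fin n => s).image List.ofFn

theorem mem_listsOfLength {s : Finset α} {n : ℕ} {l : List α} :
    l ∈ listsOfLength s n ↔ l.length = n ∧ ∀ x ∈ l, x ∈ s := by
  simp only [listsOfLength, mem_image, Fintype.mem_piFinset]
  constructor
  · rintro ⟨f, hf, rfl⟩
    simp [List.mem_ofFn, hf]
  · rintro ⟨rfl, hl⟩
    exact ⟨l.get, fun i => hl _ (List.get_mem l i), List.ofFn_get l⟩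

theorem sum_prod_map_listsOfLength {R : Type*} [CommSemiring R] (s : Finset α) (f : α → R)
    (n : ℕ) : ∑ l ∈ listsOfLength s n, (l.map f).prod = (∑ x ∈ s, f x) ^ n := by
  rw [listsOfLength, sum_image fun _ _ _ _ h => List.ofFn_injective h, sum_pow']
  simp [List.map_ofFn, List.prod_ofFn]

end ListsOfLength

theorem List.prod_map_pow_length {α M : Type*} [Monoid M] (a : M) (v : List (List α)) :
    (v.map fun x => a ^ x.length).prod = a ^ v.flatten.length := by
  induction v with
  | nil => simp
  | cons x v ih => simp [ih, pow_add]

theorem exists_flatten_eq_flatten_of_forall_mem {α : Type*} {C D : Finset (List α)} {a b : ℕ}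
    (h : ∀ x ∈ C, ∃ v : List (List α),
      (∀ y ∈ v, y ∈ D) ∧ v.flatten = x ∧ a ≤ v.length ∧ v.length ≤ b) :
    ∀ u : List (List α), (∀ x ∈ u, x ∈ C) → ∃ v : List (List α),
      (∀ y ∈ v, y ∈ D) ∧ v.flatten = u.flatten ∧ u.length * a ≤ v.length ∧
        v.length ≤ u.length * b
  | [], _ => ⟨[], by simp⟩
  | x :: u, hu => by
    obtain ⟨v, hvD, hv, hva, hvb⟩ := h x (hu x List.mem_cons_self)
    obtain ⟨w, hwD, hw, hwa, hwb⟩ :=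
      exists_flatten_eq_flatten_of_forall_mem h u fun y hy => hu y (List.mem_cons_of_mem x hy)
    refine ⟨v ++ w, ?_, by simp [hv, hw], ?_, ?_⟩
    · simpa only [List.mem_append] using fun y hy => hy.elim (hvD y) (hwD y)
    all_goals simp only [List.length_cons, List.length_append, add_one_mul]; omega

theorem UniquelyDecipherable.uniquelyDecodable {A : Type*} {C : Finset (List A)}
    (hC : UniquelyDecipherable C) : InformationTheory.UniquelyDecodable (C : Set (List A)) :=
  hC

theorem UniquelyDecipherable.exists_factorization_length_le {A : Type*} {C D : Finset (List A)}
    (hC : UniquelyDecipherable C)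
    (hCD : ∀ x ∈ C, ∃ w : List (List A), (∀ y ∈ w, y ∈ D) ∧ w.flatten = x) :
    ∃ L : ℕ, ∀ x ∈ C, ∃ v : List (List A),
      (∀ y ∈ v, y ∈ D) ∧ v.flatten = x ∧ 1 ≤ v.length ∧ v.length ≤ L := by
  choose! φ hφD hφ using hCD
  refine ⟨C.sup fun x => (φ x).length, fun x hx =>
    ⟨φ x, hφD x hx, hφ x hx, ?_, le_sup (f := fun x => (φ x).length) hx⟩⟩
  refine List.length_pos_iff.2 fun hnil => ?_
  have hx_nil := hφ x hx
  rw [hnil, List.flatten_nil] at hx_nil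
  exact hC.uniquelyDecodable.epsilon_not_mem (hx_nil ▸ hx)

section KraftSum

variable {A : Type*} [Fintype A]

theorem kraftSum_eq_sum_inv_pow (C : Finset (List A)) :
    kraftSum C = ∑ x ∈ C, (Fintype.card A : ℝ)⁻¹ ^ x.length := by
  simp only [kraftSum, zpow_neg, zpow_natCast, inv_pow]

theorem kraftSum_nonneg (C : Finset (List A)) : 0 ≤ kraftSum C := by
  rw [kraftSum_eq_sum_inv_pow]
  positivity

theorem kraftSum_pow_eq_sum_listsOfLength [DecidableEq A] (D : Finset (List A)) (n : ℕ) :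
    kraftSum D ^ n = ∑ v ∈ listsOfLength D n, (Fintype.card A : ℝ)⁻¹ ^ v.flatten.length := by
  simp only [kraftSum_eq_sum_inv_pow, ← sum_prod_map_listsOfLength, List.prod_map_pow_length]

theorem UniquelyDecipherable.kraftSum_le_one [Nonempty A] {C : Finset (List A)}
    (hC : UniquelyDecipherable C) : kraftSum C ≤ 1 := by
  simpa only [kraftSum_eq_sum_inv_pow, one_div] using
    InformationTheory.kraft_mcmillan_inequality hC.uniquelyDecodable

theorem UniquelyDecipherable.kraftSum_pow_le_sum_Icc [DecidableEq A]
    {C D : Finset (List A)} {L : ℕ} (hC : UniquelyDecipherable C)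
    (hCD : ∀ x ∈ C, ∃ v : List (List A),
      (∀ y ∈ v, y ∈ D) ∧ v.flatten = x ∧ 1 ≤ v.length ∧ v.length ≤ L) (n : ℕ) :
    kraftSum C ^ n ≤ ∑ m ∈ Icc n (n * L), kraftSum D ^ m := by
  set q := (Fintype.card A : ℝ)⁻¹
  have hrefine : ∀ u ∈ listsOfLength C n, ∃ v : List (List A),
      (∀ y ∈ v, y ∈ D) ∧ v.flatten = u.flatten ∧ v.length ∈ Icc n (n * L) := by
    intro u hu
    obtain ⟨rfl, huC⟩ := mem_listsOfLength.1 hu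
    obtain ⟨v, hvD, hv, hva, hvb⟩ := exists_flatten_eq_flatten_of_forall_mem hCD u huC
    exact ⟨v, hvD, hv, mem_Icc.2 ⟨by simpa using hva, hvb⟩⟩
  choose! F hFD hFflat hFlen using hrefine
  have hinj : Set.InjOn F (listsOfLength C n) := fun u hu u' hu' h =>
    hC u u' (mem_listsOfLength.1 hu).2 (mem_listsOfLength.1 hu').2
      (by rw [← hFflat u hu, h, hFflat u' hu'])
  calc kraftSum C ^ n
      = ∑ u ∈ listsOfLength C n, q ^ (F u).flatten.length := by
        rw [kraftSum_pow_eq_sum_listsOfLength]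
        exact sum_congr rfl fun u hu => by rw [hFflat u hu]
    _ = ∑ v ∈ (listsOfLength C n).image F, q ^ v.flatten.length :=
        (sum_image (f := fun v => q ^ v.flatten.length) hinj).symm
    _ = ∑ m ∈ Icc n (n * L), ∑ v ∈ (listsOfLength C n).image F with v.length = m,
          q ^ v.flatten.length :=
        (sum_fiberwise_of_maps_to (by simpa using hFlen) _).symm
    _ ≤ ∑ m ∈ Icc n (n * L), ∑ v ∈ listsOfLength D m, q ^ v.flatten.length := by
        refine sum_le_sum fun m _ => sum_le_sum_of_subset_of_nonneg ?_ fun _ _ _ => by positivity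
        intro v hv
        simp only [mem_filter, mem_image] at hv
        obtain ⟨⟨u, hu, rfl⟩, rfl⟩ := hv
        exact mem_listsOfLength.2 ⟨rfl, hFD u hu⟩
    _ = ∑ m ∈ Icc n (n * L), kraftSum D ^ m := by
        simp only [kraftSum_pow_eq_sum_listsOfLength, q]

end KraftSum

theorem extended_mcmillan_general {A : Type*} [Fintype A] [Nonempty A]
    (C D : Finset (List A))
    (hC : UniquelyDecipherable C)
    (hCD : ∀ x ∈ C, ∃ w : List (List A), (∀ y ∈ w, y ∈ D) ∧ w.flatten = x) :
    kraftSum C ≤ kraftSum D := by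
  classical
  obtain hD | hD := le_or_gt 1 (kraftSum D)
  · exact hC.kraftSum_le_one.trans hD
  obtain ⟨L, hL⟩ := hC.exists_factorization_length_le hCD
  refine le_of_forall_pow_le_linear_mul_pow (a := L) (b := 1) (kraftSum_nonneg D) fun n => ?_
  calc kraftSum C ^ n ≤ ∑ m ∈ Icc n (n * L), kraftSum D ^ m :=
        hC.kraftSum_pow_le_sum_Icc hL n
    _ ≤ ((n * L : ℕ) + 1) * kraftSum D ^ n := sum_Icc_pow_le (kraftSum_nonneg D) hD.le n _
    _ = (L * n + 1) * kraftSum D ^ n := by push_cast; ring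

/-- **Extended McMillan Theorem.** If `C` and `D` are uniquely decipherable codes over the
same finite nonempty alphabet, and every string in `C` is a concatenation of a finite
sequence of strings in `D`, then `K(C) ≤ K(D)`. -/
theorem extended_mcmillan {A : Type*} [Fintype A] [Nonempty A]
    (C D : Finset (List A))
    (hC : UniquelyDecipherable C) (hD : UniquelyDecipherable D)
    (hCD : ∀ x ∈ C, ∃ w : List (List A), (∀ y ∈ w, y ∈ D) ∧ w.flatten = x) :
    kraftSum C ≤ kraftSum D :=
  extended_mcmillan_general C D hC hCD
end

section
/- Inequality (7): Let C and D be nonempty uniquely decipherable codes over a finite nonempty alphabet A with r elements, such that every string in C is a concatenation of a finite sequence of strings in D. Let m be the largest integer n such that some element of C is the concatenation of a sequence of n strings from D. Then for every positive integer k, K(C)^k ≤ Σ_{l=k}^{mk} K(D)^l. -/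
/-!
Expanding `K(C)^k` gives a sum over the `k`-tuples of codewords of `C` of `r^{-len}` of their
concatenation. Splitting every codeword of `C` into its `D`-factors (between `1` and `m` of them,
since `[] ∉ C`) maps these tuples to `l`-tuples of codewords of `D` with `k ≤ l ≤ mk`, preserving
the concatenation, hence the weight; the map is injective because `C` is uniquely decipherable.
The sum over all `l`-tuples of codewords of `D` is `K(D)^l`.
-/

open Finset

section Words

variable {α : Type*} [DecidableEq α]

def wordsOfLength (E : Finset α) : ℕ → Finset (List α)
  | 0 => {[]}
  | n + 1 => (E ×ˢ wordsOfLength E n).image fun p => p.1 :: p.2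

@[simp]
theorem mem_wordsOfLength {E : Finset α} {n : ℕ} {w : List α} :
    w ∈ wordsOfLength E n ↔ w.length = n ∧ ∀ x ∈ w, x ∈ E := by
  induction n generalizing w with
  | zero => cases w <;> simp [wordsOfLength]
  | succ n ih => cases w <;> simp [wordsOfLength, ih, and_left_comm]

theorem pairwiseDisjoint_wordsOfLength (E : Finset α) (s : Set ℕ) :
    s.PairwiseDisjoint (wordsOfLength E) := fun _ _ _ _ hmn =>
  disjoint_left.2 fun _ hm hn =>
    hmn ((mem_wordsOfLength.1 hm).1.symm.trans (mem_wordsOfLength.1 hn).1)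

theorem sum_wordsOfLength_prod_map {R : Type*} [CommSemiring R] (E : Finset α) (f : α → R)
    (n : ℕ) : ∑ w ∈ wordsOfLength E n, (w.map f).prod = (∑ x ∈ E, f x) ^ n := by
  induction n with
  | zero => simp [wordsOfLength]
  | succ n ih =>
    rw [wordsOfLength, sum_image fun _ _ _ _ h => by simpa [Prod.ext_iff] using h, sum_product,
      pow_succ', ← ih, sum_mul_sum]
    simp

end Words

theorem inv_pow_length_flatten {α K : Type*} [DivisionCommMonoid K] (r : K) (w : List (List α)) :
    (r ^ w.flatten.length)⁻¹ = (w.map fun x => (r ^ x.length)⁻¹).prod := by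
  induction w with
  | nil => simp
  | cons x w ih =>
    rw [List.flatten_cons, List.length_append, pow_add, mul_inv, ih, List.map_cons, List.prod_cons]

theorem length_flatMap_mem_Icc {α β : Type*} {f : α → List β} {a b : ℕ} {w : List α}
    (h : ∀ x ∈ w, (f x).length ∈ Icc a b) :
    (w.flatMap f).length ∈ Icc (a * w.length) (b * w.length) := by
  rw [List.length_flatMap, mem_Icc, mul_comm a, mul_comm b]
  constructor
  · simpa using List.card_nsmul_le_sum (w.map fun x => (f x).length) a (by simp_all)
  · simpa using List.sum_le_card_nsmul (w.map fun x => (f x).length) b (by simp_all)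

theorem flatten_flatMap_of_flatten_eq {α : Type*} {dec : List α → List (List α)}
    {w : List (List α)} (h : ∀ x ∈ w, (dec x).flatten = x) :
    (w.flatMap dec).flatten = w.flatten := by
  induction w <;> simp_all

namespace UniquelyDecipherable

variable {α : Type*} {C : Finset (List α)}

theorem nil_notMem (hC : UniquelyDecipherable C) : [] ∉ C := fun h => by
  simpa using hC [[]] [] (by simpa) (by simp) (by simp)

theorem injOn_flatMap (hC : UniquelyDecipherable C) {dec : List α → List (List α)}
    (hdec : ∀ x ∈ C, (dec x).flatten = x) :
    Set.InjOn (List.flatMap dec) {w | ∀ x ∈ w, x ∈ C} := fun u hu v hv huv =>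
  hC u v hu hv <| by
    rw [← flatten_flatMap_of_flatten_eq fun x hx => hdec x (hu x hx),
      ← flatten_flatMap_of_flatten_eq fun x hx => hdec x (hv x hx), huv]

end UniquelyDecipherable

section Kraft

variable {A : Type*} [Fintype A] [DecidableEq A]

theorem kraftSum_pow_eq_sum_wordsOfLength (C : Finset (List A)) (k : ℕ) :
    kraftSum C ^ k =
      ∑ w ∈ wordsOfLength C k, ((Fintype.card A : ℝ) ^ w.flatten.length)⁻¹ := by
  simp only [kraftSum, zpow_neg, zpow_natCast, inv_pow_length_flatten,
    sum_wordsOfLength_prod_map]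

theorem kraftSum_pow_le_of_decomposition {C D : Finset (List A)}
    (hC : UniquelyDecipherable C) {dec : List A → List (List A)}
    (hdecD : ∀ x ∈ C, ∀ y ∈ dec x, y ∈ D) (hdec : ∀ x ∈ C, (dec x).flatten = x)
    {a b : ℕ} (hlen : ∀ x ∈ C, (dec x).length ∈ Icc a b) (k : ℕ) :
    kraftSum C ^ k ≤ ∑ l ∈ Icc (a * k) (b * k), kraftSum D ^ l := by
  set μ : List (List A) → ℝ := fun w => ((Fintype.card A : ℝ) ^ w.flatten.length)⁻¹
  have hsub : (wordsOfLength C k).image (List.flatMap dec) ⊆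
      (Icc (a * k) (b * k)).biUnion (wordsOfLength D) := by
    intro v hv
    obtain ⟨w, hw, rfl⟩ := mem_image.1 hv
    obtain ⟨rfl, hwC⟩ := mem_wordsOfLength.1 hw
    refine mem_biUnion.2 ⟨_, length_flatMap_mem_Icc fun x hx => hlen x (hwC x hx), ?_⟩
    simp only [mem_wordsOfLength, List.mem_flatMap, true_and]
    rintro y ⟨x, hx, hy⟩
    exact hdecD x (hwC x hx) y hy
  calc kraftSum C ^ k
    _ = ∑ w ∈ wordsOfLength C k, μ w := kraftSum_pow_eq_sum_wordsOfLength C k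
    _ = ∑ v ∈ (wordsOfLength C k).image (List.flatMap dec), μ v := by
      rw [sum_image fun u hu v hv => hC.injOn_flatMap hdec (mem_wordsOfLength.1 hu).2
        (mem_wordsOfLength.1 hv).2]
      refine sum_congr rfl fun w hw => ?_
      have hwC := (mem_wordsOfLength.1 hw).2
      simp only [μ, flatten_flatMap_of_flatten_eq fun x hx => hdec x (hwC x hx)]
    _ ≤ ∑ v ∈ (Icc (a * k) (b * k)).biUnion (wordsOfLength D), μ v :=
      sum_le_sum_of_subset_of_nonneg hsub fun _ _ _ => by positivity
    _ = ∑ l ∈ Icc (a * k) (b * k), kraftSum D ^ l := by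
      rw [sum_biUnion (pairwiseDisjoint_wordsOfLength D _)]
      exact sum_congr rfl fun l _ => (kraftSum_pow_eq_sum_wordsOfLength D l).symm

end Kraft

theorem kraft_pow_le_sum_pow_general {A : Type*} [Fintype A]
    (C D : Finset (List A))
    (hC : UniquelyDecipherable C)
    (hCD : ∀ x ∈ C, ∃ w : List (List A), (∀ y ∈ w, y ∈ D) ∧ w.flatten = x)
    (m : ℕ)
    (hmax : ∀ n : ℕ,
      (∃ x ∈ C, ∃ w : List (List A), (∀ y ∈ w, y ∈ D) ∧ w.flatten = x ∧ w.length = n) → n ≤ m)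
    (k : ℕ) :
    kraftSum C ^ k ≤ ∑ l ∈ Finset.Icc k (m * k), kraftSum D ^ l := by
  classical
  choose! dec hdecD hdec using hCD
  have hlen : ∀ x ∈ C, (dec x).length ∈ Icc 1 m := fun x hx => mem_Icc.2
    ⟨List.length_pos_iff.2 fun hnil => hC.nil_notMem (by rwa [← hdec x hx, hnil] at hx),
      hmax _ ⟨x, hx, dec x, hdecD x hx, hdec x hx, rfl⟩⟩
  simpa using kraftSum_pow_le_of_decomposition hC hdecD hdec hlen k

/-- **Inequality (7).** For nonempty uniquely decipherable codes `C ⊆ D̄` with `m` the largest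
number of `D`-factors of an element of `C`, we have `K(C)^k ≤ Σ_{l=k}^{mk} K(D)^l`. -/
theorem kraft_pow_le_sum_pow {A : Type*} [Fintype A] [Nonempty A]
    (C D : Finset (List A)) (hCne : C.Nonempty) (hDne : D.Nonempty)
    (hC : UniquelyDecipherable C) (hD : UniquelyDecipherable D)
    (hCD : ∀ x ∈ C, ∃ w : List (List A), (∀ y ∈ w, y ∈ D) ∧ w.flatten = x)
    (m : ℕ)
    (hm : ∃ x ∈ C, ∃ w : List (List A), (∀ y ∈ w, y ∈ D) ∧ w.flatten = x ∧ w.length = m)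
    (hmax : ∀ n : ℕ,
      (∃ x ∈ C, ∃ w : List (List A), (∀ y ∈ w, y ∈ D) ∧ w.flatten = x ∧ w.length = n) → n ≤ m)
    (k : ℕ) (hk : 0 < k) :
    kraftSum C ^ k ≤ ∑ l ∈ Finset.Icc k (m * k), kraftSum D ^ l :=
  kraft_pow_le_sum_pow_general C D hC hCD m hmax k
end

section
/- Let C and D be uniquely decipherable codes over a finite nonempty alphabet A with r elements, such that every string in C is a concatenation of a finite sequence of strings in D, and let k be a positive integer. Then for every sequence v of k strings from C there is exactly one finite sequence w of strings from D with con(w) = con(v); consequently Σ_{w} r^{-len(con(w))} = K(C)^k, where the sum ranges over all finite sequences w of strings from D whose concatenation lies in con[C^k] = {con(v) : v ∈ C^k}. -/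
/-!
Every word of `C` factors over `D`, hence so does every concatenation of words of `C`, and the
factorization is unique because `D` is a code. Thus `flatten` is a bijection from the
`D`-factorizations of the strings of `con[C^k]` onto `con[C^k]`, and, `C` being a code, `flatten`
is also a bijection from `C^k` onto `con[C^k]`. The weight `r^{-len}` is multiplicative under
concatenation, so the sum over `C^k` expands to `K(C)^k`.
-/

open Finset Fintype

/-- The concatenations of `k` codewords of `C`, written `con[C^k]` in the text. -/
def concatPow {α : Type*} (C : Finset (List α)) (k : ℕ) : Set (List α) :=
  {x | ∃ v : List (List α), (∀ y ∈ v, y ∈ C) ∧ v.length = k ∧ v.flatten = x}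

section Factorization

variable {α : Type*}

theorem exists_flatten_eq_of_forall_mem {D : Finset (List α)} {v : List (List α)}
    (hv : ∀ x ∈ v, ∃ w : List (List α), (∀ y ∈ w, y ∈ D) ∧ w.flatten = x) :
    ∃ w : List (List α), (∀ y ∈ w, y ∈ D) ∧ w.flatten = v.flatten := by
  induction v with
  | nil => exact ⟨[], by simp, rfl⟩
  | cons x v ih =>
    obtain ⟨w₁, hw₁D, rfl⟩ := hv x List.mem_cons_self
    obtain ⟨w₂, hw₂D, hw₂⟩ := ih fun x hx => hv x (List.mem_cons_of_mem _ hx)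
    refine ⟨w₁ ++ w₂, fun y hy => ?_, by simp [hw₂]⟩
    exact (List.mem_append.mp hy).elim (hw₁D y) (hw₂D y)

theorem UniquelyDecipherable.injOn_flatten {D : Finset (List α)} (hD : UniquelyDecipherable D) :
    Set.InjOn List.flatten {w : List (List α) | ∀ y ∈ w, y ∈ D} :=
  fun u hu v hv huv => hD u v hu hv huv

theorem UniquelyDecipherable.existsUnique_flatten_eq {D : Finset (List α)}
    (hD : UniquelyDecipherable D) {v : List (List α)}
    (hv : ∀ x ∈ v, ∃ w : List (List α), (∀ y ∈ w, y ∈ D) ∧ w.flatten = x) :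
    ∃! w : List (List α), (∀ y ∈ w, y ∈ D) ∧ w.flatten = v.flatten := by
  obtain ⟨w, hw⟩ := exists_flatten_eq_of_forall_mem hv
  exact ⟨w, hw, fun w' hw' => hD w' w hw'.1 hw.1 (hw'.2.trans hw.2.symm)⟩

theorem forall_mem_ofFn_of_mem_piFinset {β : Type*} {s : Finset β} {k : ℕ} {p : Fin k → β}
    (hp : p ∈ piFinset fun _ => s) : ∀ y ∈ List.ofFn p, y ∈ s := by
  intro y hy
  obtain ⟨i, rfl⟩ := List.mem_ofFn.mp hy
  exact mem_piFinset.mp hp i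

variable {M : Type*} [AddCommMonoid M] [TopologicalSpace M]

theorem UniquelyDecipherable.tsum_factorizations_eq {D : Finset (List α)}
    (hD : UniquelyDecipherable D) {T : Set (List α)}
    (hT : ∀ x ∈ T, ∃ w : List (List α), (∀ y ∈ w, y ∈ D) ∧ w.flatten = x)
    (f : List α → M) :
    ∑' w : {w : List (List α) // (∀ y ∈ w, y ∈ D) ∧ w.flatten ∈ T}, f w.1.flatten =
      ∑' x : T, f x := by
  let S : Set (List (List α)) := {w | (∀ y ∈ w, y ∈ D) ∧ w.flatten ∈ T}
  have himage : List.flatten '' S = T := by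
    refine Set.Subset.antisymm (Set.image_subset_iff.mpr fun w hw => hw.2) fun x hx => ?_
    obtain ⟨w, hwD, rfl⟩ := hT x hx
    exact ⟨w, ⟨hwD, hx⟩, rfl⟩
  have hinj : Set.InjOn List.flatten S := hD.injOn_flatten.mono fun _ => And.left
  conv_rhs => rw [← himage]
  exact (tsum_image f hinj).symm

theorem image_flatten_ofFn_piFinset (C : Finset (List α)) (k : ℕ) :
    (fun p : Fin k → List α => (List.ofFn p).flatten) '' ↑(piFinset fun _ : Fin k => C) =
      concatPow C k := by
  ext x
  constructor
  · rintro ⟨p, hp, rfl⟩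
    exact ⟨List.ofFn p, forall_mem_ofFn_of_mem_piFinset hp, List.length_ofFn, rfl⟩
  · rintro ⟨v, hvC, rfl, rfl⟩
    exact ⟨v.get, mem_piFinset.mpr fun i => hvC _ (v.get_mem i),
      congrArg List.flatten (List.ofFn_get v)⟩

theorem UniquelyDecipherable.injOn_flatten_ofFn {C : Finset (List α)}
    (hC : UniquelyDecipherable C) (k : ℕ) :
    Set.InjOn (fun p : Fin k → List α => (List.ofFn p).flatten)
      ↑(piFinset fun _ : Fin k => C) :=
  fun _ hp _ hq hpq => List.ofFn_injective <|
    hC _ _ (forall_mem_ofFn_of_mem_piFinset hp) (forall_mem_ofFn_of_mem_piFinset hq) hpq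

theorem UniquelyDecipherable.tsum_concatPow_eq_sum_piFinset {C : Finset (List α)}
    (hC : UniquelyDecipherable C) (k : ℕ) (f : List α → M) :
    ∑' x : concatPow C k, f x =
      ∑ p ∈ piFinset fun _ : Fin k => C, f (List.ofFn p).flatten := by
  rw [← image_flatten_ofFn_piFinset, tsum_image _ (hC.injOn_flatten_ofFn k)]
  exact Finset.tsum_subtype' _ fun p => f (List.ofFn p).flatten

end Factorization

theorem zpow_neg_length_flatten {α M : Type*} [DivisionMonoid M] (r : M) (v : List (List α)) :
    r ^ (-(v.flatten.length : ℤ)) = (v.map fun x => r ^ (-(x.length : ℤ))).prod := by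
  simp only [zpow_neg, zpow_natCast, ← inv_pow]
  induction v with
  | nil => simp
  | cons x v ih =>
    rw [List.flatten_cons, List.length_append, pow_add, ih, List.map_cons, List.prod_cons]

theorem kraftSum_pow {A : Type*} [Fintype A] (C : Finset (List A)) (k : ℕ) :
    kraftSum C ^ k = ∑ p ∈ piFinset fun _ : Fin k => C,
      (Fintype.card A : ℝ) ^ (-((List.ofFn p).flatten.length : ℤ)) := by
  simp only [kraftSum, sum_pow', zpow_neg_length_flatten, List.map_ofFn, List.prod_ofFn]
  rfl

theorem unique_factorization_and_sum_general {A : Type*} [Fintype A]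
    (C D : Finset (List A))
    (hC : UniquelyDecipherable C) (hD : UniquelyDecipherable D)
    (hCD : ∀ x ∈ C, ∃ w : List (List A), (∀ y ∈ w, y ∈ D) ∧ w.flatten = x)
    (k : ℕ) :
    (∀ v : List (List A), (∀ x ∈ v, x ∈ C) → v.length = k →
      ∃! w : List (List A), (∀ y ∈ w, y ∈ D) ∧ w.flatten = v.flatten) ∧
    ∑' w : {w : List (List A) // (∀ y ∈ w, y ∈ D) ∧
        ∃ v : List (List A), (∀ x ∈ v, x ∈ C) ∧ v.length = k ∧ v.flatten = w.flatten},
      (Fintype.card A : ℝ) ^ (-(((w : List (List A)).flatten.length : ℤ))) =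
      kraftSum C ^ k := by
  refine ⟨fun v hv _ => hD.existsUnique_flatten_eq fun x hx => hCD x (hv x hx), ?_⟩
  have hfactors :
      ∀ x ∈ concatPow C k, ∃ w : List (List A), (∀ y ∈ w, y ∈ D) ∧ w.flatten = x := by
    rintro x ⟨v, hvC, -, rfl⟩
    exact exists_flatten_eq_of_forall_mem fun x hx => hCD x (hvC x hx)
  let weight (x : List A) : ℝ := (Fintype.card A : ℝ) ^ (-(x.length : ℤ))
  calc _ = ∑' x : concatPow C k, weight x := hD.tsum_factorizations_eq hfactors weight
    _ = _ := hC.tsum_concatPow_eq_sum_piFinset k weight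
    _ = kraftSum C ^ k := (kraftSum_pow C k).symm

/-- If `C` and `D` are uniquely decipherable codes with every string of `C` a concatenation
of strings in `D`, then every sequence `v` of `k` strings from `C` has a unique
`D`-factorization of its concatenation; consequently the sum of `r^{-len(con(w))}` over all
sequences `w` of strings from `D` with `con(w) ∈ con[C^k]` equals `K(C)^k`. -/
theorem unique_factorization_and_sum {A : Type*} [Fintype A] [Nonempty A]
    (C D : Finset (List A))
    (hC : UniquelyDecipherable C) (hD : UniquelyDecipherable D)
    (hCD : ∀ x ∈ C, ∃ w : List (List A), (∀ y ∈ w, y ∈ D) ∧ w.flatten = x)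
    (k : ℕ) (hk : 0 < k) :
    (∀ v : List (List A), (∀ x ∈ v, x ∈ C) → v.length = k →
      ∃! w : List (List A), (∀ y ∈ w, y ∈ D) ∧ w.flatten = v.flatten) ∧
    ∑' w : {w : List (List A) // (∀ y ∈ w, y ∈ D) ∧
        ∃ v : List (List A), (∀ x ∈ v, x ∈ C) ∧ v.length = k ∧ v.flatten = w.flatten},
      (Fintype.card A : ℝ) ^ (-(((w : List (List A)).flatten.length : ℤ))) =
      kraftSum C ^ k :=
  unique_factorization_and_sum_general C D hC hD hCD k
end
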